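/- arXiv:2502.16494 — 4 statements merged into one kernel-verified Lean document; each statement's English description precedes it below -/
import Mathlib

section
/- Let S = ⊕_{n≥0} S_n be a commutative standard graded ring over S_0, i.e. S is generated as an S_0-algebra by finitely many elements of degree 1, and assume the Krull dimension of S_0 is finite. Let E = ⊕_{n≥0} E_n be a finitely generated graded S-module. Then the S_0-dimension dim_{S_0} E_n (the Krull dimension of S_0/ann_{S_0}(E_n)) is constant for all n ≫ 0. -/
universe u

/-- `dimOf R N` is the Krull dimension of `R / ann_R(N)` (with the dimension of the
zero ring equal to `⊥`). -/
noncomputable def dimOf (R : Type*) (M : Type*) [CommRing R] [AddCommGroup M] [Module R M] :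
    WithBot ℕ∞ :=
  ringKrullDim (R ⧸ Module.annihilator R M)

section Aux

open DirectSum

variable {S₀ : Type u} [CommRing S₀] {S : Type u} [CommRing S] [Algebra S₀ S]
  (𝒜 : ℕ → Submodule S₀ S) [GradedAlgebra 𝒜]

/-- In a standard graded algebra, `𝒜 (m+1) ≤ 𝒜 1 * 𝒜 m`. -/
lemma aux_standard
    (hstd : ∃ s : Finset S, (s : Set S) ⊆ (𝒜 1 : Set S) ∧ Algebra.adjoin S₀ (s : Set S) = ⊤)
    (m : ℕ) : 𝒜 (m + 1) ≤ 𝒜 1 * 𝒜 m := by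
  classical
  obtain ⟨s, hs1, htop⟩ := hstd
  have hmul_le : ∀ i j : ℕ, 𝒜 i * 𝒜 j ≤ 𝒜 (i + j) :=
    fun i j => Submodule.mul_le.2 fun a ha b hb => SetLike.mul_mem_graded ha hb
  -- every element of the monoid closure of `s` is homogeneous, and if of degree `j+1`,
  -- lies in `𝒜 1 * 𝒜 j`.
  have Q : ∀ x ∈ Submonoid.closure (s : Set S),
      ∃ k, x ∈ 𝒜 k ∧ ∀ j, k = j + 1 → x ∈ 𝒜 1 * 𝒜 j := by
    intro x hx
    induction hx using Submonoid.closure_induction with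
    | mem x hx =>
        refine ⟨1, hs1 hx, ?_⟩
        intro j hj
        obtain rfl : j = 0 := by omega
        have h1 : (1 : S) ∈ 𝒜 0 := SetLike.one_mem_graded 𝒜
        have := Submodule.mul_mem_mul (hs1 hx) h1
        simpa using this
    | one => exact ⟨0, SetLike.one_mem_graded 𝒜, fun j hj => by omega⟩
    | mul a b ha hb iha ihb =>
        obtain ⟨k, hk, hk1⟩ := iha
        obtain ⟨l, hl, hl1⟩ := ihb
        refine ⟨k + l, SetLike.mul_mem_graded hk hl, ?_⟩
        intro j hj
        rcases k with _ | k'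
        · -- k = 0, so l = j + 1
          have hlj : l = j + 1 := by omega
          have hb' : b ∈ 𝒜 1 * 𝒜 j := hl1 j hlj
          have : a * b ∈ 𝒜 0 * (𝒜 1 * 𝒜 j) := Submodule.mul_mem_mul hk hb'
          have hle : 𝒜 0 * (𝒜 1 * 𝒜 j) ≤ 𝒜 1 * 𝒜 j := by
            rw [mul_left_comm]
            refine le_trans (mul_le_mul' le_rfl (hmul_le 0 j)) ?_
            simp
          exact hle this
        · -- k = k' + 1
          have ha' : a ∈ 𝒜 1 * 𝒜 k' := hk1 k' rfl
          have : a * b ∈ (𝒜 1 * 𝒜 k') * 𝒜 l := Submodule.mul_mem_mul ha' hl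
          have hle : (𝒜 1 * 𝒜 k') * 𝒜 l ≤ 𝒜 1 * 𝒜 j := by
            rw [mul_assoc]
            refine le_trans (mul_le_mul' le_rfl (hmul_le k' l)) ?_
            have : k' + l = j := by omega
            rw [this]
          exact hle this
  intro x hx
  have hx' : x ∈ Submodule.span S₀ ((Submonoid.closure (s : Set S) : Submonoid S) : Set S) := by
    have : x ∈ Subalgebra.toSubmodule (Algebra.adjoin S₀ (s : Set S)) := by
      rw [htop]; exact Submodule.mem_top
    rwa [Algebra.adjoin_eq_span] at this
  have key : ∀ y ∈ Submodule.span S₀ ((Submonoid.closure (s : Set S) : Submonoid S) : Set S),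
      (DirectSum.decompose 𝒜 y (m + 1) : S) ∈ 𝒜 1 * 𝒜 m := by
    intro y hy
    induction hy using Submodule.span_induction with
    | mem y hy =>
        obtain ⟨k, hk, hk1⟩ := Q y hy
        by_cases hkm : k = m + 1
        · subst hkm
          rw [DirectSum.decompose_of_mem_same 𝒜 hk]
          exact hk1 m rfl
        · rw [DirectSum.decompose_of_mem_ne 𝒜 hk hkm]
          exact zero_mem _
    | zero => simp
    | add y z hy hz ihy ihz =>
        rw [DirectSum.decompose_add]
        simpa using add_mem ihy ihz
    | smul r y hy ihy =>
        rw [DirectSum.decompose_smul, DirectSum.smul_apply]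
        simpa using Submodule.smul_mem _ r ihy
  have := key x hx'
  rwa [DirectSum.decompose_of_mem_same 𝒜 hx] at this

end Aux

/-- Lemma 2.3: if `S = ⊕ₙ Sₙ` is standard graded over `S₀` (generated as an `S₀`-algebra by
finitely many degree-one elements), `S₀` has finite Krull dimension, and
`E = ⊕ₙ Eₙ` is a finitely generated graded `S`-module, then `dim_{S₀} Eₙ` is constant
for `n ≫ 0`. -/
theorem dim_components_eventually_constant
    (S₀ : Type u) [CommRing S₀] (S : Type u) [CommRing S] [Algebra S₀ S]
    (𝒜 : ℕ → Submodule S₀ S) [GradedAlgebra 𝒜]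
    (hstd : ∃ s : Finset S, (s : Set S) ⊆ (𝒜 1 : Set S) ∧ Algebra.adjoin S₀ (s : Set S) = ⊤)
    (hdim : ringKrullDim S₀ < ⊤)
    (E : Type u) [AddCommGroup E] [Module S E] [Module S₀ E] [IsScalarTower S₀ S E]
    [Module.Finite S E]
    (ℳ : ℕ → Submodule S₀ E) [DirectSum.Decomposition ℳ] [SetLike.GradedSMul 𝒜 ℳ] :
    ∃ N : ℕ, ∀ n : ℕ, N ≤ n → dimOf S₀ (ℳ n) = dimOf S₀ (ℳ N) := by
  classical
  obtain ⟨n0, e, he⟩ := Module.Finite.exists_fin (R := S) (M := E)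
  -- bound on the degrees of the homogeneous components of the generators
  set B : ℕ := Finset.univ.sup fun i : Fin n0 => (DirectSum.decompose ℳ (e i)).support.sup id
    with hB
  -- the target submodule: S₀-span of (𝒜 1) • (ℳ m)
  set target : ℕ → Submodule S₀ E := fun m =>
    Submodule.span S₀ {y : E | ∃ a ∈ 𝒜 1, ∃ z ∈ ℳ m, y = a • z} with htarget
  -- the degree-(m+1) projection, as an S₀-linear map
  set π : ℕ → (E →ₗ[S₀] E) := fun m =>
    (ℳ (m + 1)).subtype.comp ((DFinsupp.lapply (m + 1)).comp
      (DirectSum.decomposeLinearEquiv ℳ).toLinearMap) with hπ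
  have hπ_apply : ∀ (m : ℕ) (y : E), π m y = (DirectSum.decompose ℳ y (m + 1) : E) := by
    intro m y; rfl
  -- key computation for a homogeneous element
  have hterm : ∀ (m d : ℕ), d ≤ m → ∀ (s : S) (g : E), g ∈ ℳ d →
      π m (s • g) ∈ target m := by
    intro m d hdm s g hg
    rw [hπ_apply]
    have hs : ∑ k ∈ (DirectSum.decompose 𝒜 s).support, (DirectSum.decompose 𝒜 s k : S) = s :=
      DirectSum.sum_support_decompose 𝒜 s
    rw [← hs, Finset.sum_smul]
    have : DirectSum.decompose ℳ
        (∑ k ∈ (DirectSum.decompose 𝒜 s).support, (DirectSum.decompose 𝒜 s k : S) • g) (m + 1)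
        = ∑ k ∈ (DirectSum.decompose 𝒜 s).support,
          DirectSum.decompose ℳ ((DirectSum.decompose 𝒜 s k : S) • g) (m + 1) := by
      rw [DirectSum.decompose_sum]
      exact DFinsupp.finset_sum_apply _ _ _
    rw [this]
    push_cast [AddSubmonoidClass.coe_finset_sum]
    refine Submodule.sum_mem _ ?_
    intro k _
    have hmem : (DirectSum.decompose 𝒜 s k : S) • g ∈ ℳ (k + d) :=
      SetLike.GradedSMul.smul_mem (DirectSum.decompose 𝒜 s k).2 hg
    by_cases hkd : k + d = m + 1
    · rw [DirectSum.decompose_of_mem_same ℳ (hkd ▸ hmem)]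
      -- k ≥ 1 since d ≤ m
      obtain ⟨k', rfl⟩ : ∃ k', k = k' + 1 := ⟨k - 1, by omega⟩
      have hsk : (DirectSum.decompose 𝒜 s (k' + 1) : S) ∈ 𝒜 1 * 𝒜 k' :=
        aux_standard 𝒜 hstd k' (DirectSum.decompose 𝒜 s (k' + 1)).2
      -- show t • g ∈ target m for every t ∈ 𝒜 1 * 𝒜 k'
      refine Submodule.mul_induction_on hsk ?_ ?_
      · intro a ha b hb
        rw [mul_smul]
        have hbg : b • g ∈ ℳ m := by
          have : b • g ∈ ℳ (k' + d) := SetLike.GradedSMul.smul_mem hb hg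
          have hkm : k' + d = m := by omega
          rwa [hkm] at this
        exact Submodule.subset_span ⟨a, ha, b • g, hbg, rfl⟩
      · intro t u ht hu
        rw [add_smul]
        exact add_mem ht hu
    · rw [DirectSum.decompose_of_mem_ne ℳ hmem hkd]
      exact zero_mem _
  -- ℳ (m+1) ≤ target m for m ≥ B
  have hkey : ∀ m : ℕ, B ≤ m → ∀ x ∈ ℳ (m + 1), x ∈ target m := by
    intro m hm x hx
    have hxtop : x ∈ Submodule.span S (Set.range e) := by rw [he]; exact Submodule.mem_top
    obtain ⟨c, hc⟩ := Submodule.mem_span_range_iff_exists_fun S |>.1 hxtop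
    have hx' : (DirectSum.decompose ℳ x (m + 1) : E) = x :=
      DirectSum.decompose_of_mem_same ℳ hx
    rw [← hx', ← hπ_apply, ← hc, map_sum]
    refine Submodule.sum_mem _ ?_
    intro i _
    -- e i = sum of its homogeneous components
    have hei : ∑ k ∈ (DirectSum.decompose ℳ (e i)).support,
        (DirectSum.decompose ℳ (e i) k : E) = e i :=
      DirectSum.sum_support_decompose ℳ (e i)
    rw [← hei, Finset.smul_sum, map_sum]
    refine Submodule.sum_mem _ ?_
    intro k hk
    have hkB : k ≤ B := by
      refine le_trans ?_ (Finset.le_sup (f := fun i : Fin n0 =>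
        (DirectSum.decompose ℳ (e i)).support.sup id) (Finset.mem_univ i))
      exact Finset.le_sup (f := id) hk
    exact hterm m k (hkB.trans hm) (c i) _ (DirectSum.decompose ℳ (e i) k).2
  -- annihilators increase from degree B on
  have hann : ∀ n : ℕ, B ≤ n →
      Module.annihilator S₀ (ℳ n) ≤ Module.annihilator S₀ (ℳ (n + 1)) := by
    intro n hn r hr
    rw [Module.mem_annihilator] at hr ⊢
    intro x
    have hx : (x : E) ∈ target n := hkey n hn x x.2
    have hker : target n ≤ LinearMap.ker (LinearMap.lsmul S₀ E r) := by
      rw [htarget, Submodule.span_le]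
      rintro _ ⟨a, ha, z, hz, rfl⟩
      have hrz : r • z = 0 := congrArg Subtype.val (hr ⟨z, hz⟩)
      have : r • (a • z) = a • (r • z) := by
        rw [← algebraMap_smul S r (a • z), ← mul_smul, mul_comm, mul_smul, algebraMap_smul]
      simp only [SetLike.mem_coe, LinearMap.mem_ker, LinearMap.lsmul_apply]
      rw [this, hrz, smul_zero]
    have := hker hx
    rw [LinearMap.mem_ker, LinearMap.lsmul_apply] at this
    exact Subtype.ext (by simpa using this)
  -- the dimension sequence
  set f : ℕ → WithBot ℕ∞ := fun n => dimOf S₀ (ℳ n) with hf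
  have hstep : ∀ n : ℕ, B ≤ n → f (n + 1) ≤ f n := by
    intro n hn
    have hsurj : Function.Surjective
        (Ideal.Quotient.factor (hann n hn)) := by
      intro y
      obtain ⟨x, rfl⟩ := Ideal.Quotient.mk_surjective y
      exact ⟨Ideal.Quotient.mk _ x, Ideal.Quotient.factor_mk _ x⟩
    exact ringKrullDim_le_of_surjective _ hsurj
  have hchain : ∀ a b : ℕ, B ≤ a → a ≤ b → f b ≤ f a := by
    intro a b ha hab
    induction b, hab using Nat.le_induction with
    | base => exact le_rfl
    | succ n hn ih => exact le_trans (hstep n (ha.trans hn)) ih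
  -- use well-foundedness to find the stable value
  have wf : WellFounded ((· < ·) : WithBot ℕ∞ → WithBot ℕ∞ → Prop) := wellFounded_lt
  obtain ⟨v, hvA, hvmin⟩ := wf.has_min (f '' Set.Ici B) ⟨f B, B, Set.self_mem_Ici, rfl⟩
  obtain ⟨N1, hN1, rfl⟩ := hvA
  refine ⟨N1, ?_⟩
  intro n hn
  have h1 : f n ≤ f N1 := hchain N1 n hN1 hn
  have h2 : ¬ f n < f N1 := hvmin (f n) ⟨n, hN1.trans hn, rfl⟩
  exact le_antisymm h1 (not_lt.1 h2)
end

section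
/- Let S_0 be a commutative Noetherian ring of finite Krull dimension and let S = S_0[X_1,…,X_c] be a polynomial ring, graded so that S_0 sits in degree 0 and each variable X_i has degree 2. Let E = ⊕_{n≥0} E_n be a finitely generated graded S-module. Then for each j ∈ {0,1}, the S_0-dimension dim_{S_0} E_{2n+j} (the Krull dimension of S_0/ann_{S_0}(E_{2n+j})) is constant for all n ≫ 0. -/
universe u

attribute [local instance] MvPolynomial.weightedGradedAlgebra

section Aux

variable {S₀ : Type u} [CommRing S₀] (c : ℕ)
  {E : Type u} [AddCommGroup E] [Module (MvPolynomial (Fin c) S₀) E] [Module S₀ E]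
  [IsScalarTower S₀ (MvPolynomial (Fin c) S₀) E]

/-- Scalar multiplication by the variable `X i`, as an `S₀`-linear endomorphism of `E`. -/
noncomputable def smulX (i : Fin c) : E →ₗ[S₀] E where
  toFun e := (MvPolynomial.X i : MvPolynomial (Fin c) S₀) • e
  map_add' _ _ := smul_add _ _ _
  map_smul' r e := (smul_comm r (MvPolynomial.X i : MvPolynomial (Fin c) S₀) e).symm

variable (ℳ : ℕ → Submodule S₀ E) [DirectSum.Decomposition ℳ]
  [SetLike.GradedSMul
    (MvPolynomial.weightedHomogeneousSubmodule S₀ (fun _ : Fin c => (2 : ℕ))) ℳ]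

/-- The target submodule: the `S₀`-span of `X i • (ℳ m)` over all `i`. -/
noncomputable def WW (m : ℕ) : Submodule S₀ E :=
  ⨆ i : Fin c, (ℳ m).map (smulX c i)

theorem homog_smul_mem {w k : ℕ} (hw : 2 ≤ w) {p : MvPolynomial (Fin c) S₀}
    (hp : p ∈ MvPolynomial.weightedHomogeneousSubmodule S₀ (fun _ : Fin c => (2 : ℕ)) w)
    {g : E} (hg : g ∈ ℳ k) :
    p • g ∈ WW c ℳ (w - 2 + k) := by
  classical
  rw [MvPolynomial.mem_weightedHomogeneousSubmodule] at hp
  have hsum := MvPolynomial.as_sum p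
  rw [hsum, Finset.sum_smul]
  refine Submodule.sum_mem _ ?_
  intro d hd
  have hwd : Finsupp.weight (fun _ : Fin c => (2 : ℕ)) d = w :=
    hp (MvPolynomial.mem_support_iff.mp hd)
  -- find a variable occurring in `d`
  have hd0 : d ≠ 0 := by
    rintro rfl
    rw [map_zero] at hwd
    omega
  obtain ⟨i, hi⟩ : ∃ i, d i ≠ 0 := by
    by_contra h
    push_neg at h
    exact hd0 (Finsupp.ext fun j => h j)
  set d' : Fin c →₀ ℕ := d - Finsupp.single i 1 with hd'
  have hdd : Finsupp.single i 1 + d' = d := by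
    ext j
    simp only [Finsupp.add_apply, Finsupp.single_apply, hd', Finsupp.tsub_apply]
    by_cases hji : i = j
    · subst hji; simp; omega
    · simp [hji]
  have hws : Finsupp.weight (fun _ : Fin c => (2 : ℕ)) (Finsupp.single i 1) = 2 := by
    rw [Finsupp.weight_apply, Finsupp.sum_single_index] <;> simp
  have hwd' : Finsupp.weight (fun _ : Fin c => (2 : ℕ)) d' = w - 2 := by
    have := congrArg (Finsupp.weight (fun _ : Fin c => (2 : ℕ))) hdd
    rw [map_add, hws, hwd] at this
    omega
  have hmono : (MvPolynomial.monomial d (MvPolynomial.coeff d p)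
      : MvPolynomial (Fin c) S₀)
      = MvPolynomial.X i * MvPolynomial.monomial d' (MvPolynomial.coeff d p) := by
    rw [MvPolynomial.X, MvPolynomial.monomial_mul, one_mul, hdd]
  rw [hmono, mul_smul]
  have hq : (MvPolynomial.monomial d' (MvPolynomial.coeff d p)
      : MvPolynomial (Fin c) S₀)
      ∈ MvPolynomial.weightedHomogeneousSubmodule S₀ (fun _ : Fin c => (2 : ℕ)) (w - 2) :=
    MvPolynomial.isWeightedHomogeneous_monomial _ _ _ hwd'
  have hqg : (MvPolynomial.monomial d' (MvPolynomial.coeff d p)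
      : MvPolynomial (Fin c) S₀) • g ∈ ℳ (w - 2 + k) :=
    SetLike.GradedSMul.smul_mem hq hg
  refine Submodule.mem_iSup_of_mem i ?_
  exact Submodule.mem_map_of_mem hqg

theorem comp_smul_mem {m k : ℕ} (hkm : k + 2 ≤ m) (a : MvPolynomial (Fin c) S₀) {g : E}
    (hg : g ∈ ℳ k) :
    ((DirectSum.decompose ℳ (a • g) m : ℳ m) : E) ∈ WW c ℳ (m - 2) := by
  induction a using DirectSum.Decomposition.inductionOn
    (ℳ := MvPolynomial.weightedHomogeneousSubmodule S₀ (fun _ : Fin c => (2 : ℕ))) with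
  | zero =>
    rw [zero_smul, DirectSum.decompose_zero]
    simp
  | homogeneous p =>
    rename_i j
    obtain ⟨p, hp⟩ := p
    have hpg : p • g ∈ ℳ (j + k) := SetLike.GradedSMul.smul_mem hp hg
    by_cases hjm : j + k = m
    · rw [DirectSum.decompose_of_mem_same ℳ (hjm ▸ hpg)]
      have h2j : 2 ≤ j := by omega
      have := homog_smul_mem c ℳ h2j hp hg
      have hj2 : j - 2 + k = m - 2 := by omega
      rwa [hj2] at this
    · rw [DirectSum.decompose_of_mem_ne ℳ hpg hjm]
      simp
  | add x y hx hy =>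
    rw [add_smul, DirectSum.decompose_add, DirectSum.add_apply, Submodule.coe_add]
    exact add_mem hx hy

/-- The degree-`m` component, as an `S₀`-linear map. -/
noncomputable def proj (m : ℕ) : E →ₗ[S₀] E :=
  (ℳ m).subtype ∘ₗ (DirectSum.component S₀ ℕ (fun n => ℳ n) m) ∘ₗ
    (DirectSum.decomposeLinearEquiv ℳ).toLinearMap

theorem proj_apply (m : ℕ) (e : E) : proj ℳ m e = (DirectSum.decompose ℳ e m : E) := rfl

theorem main_inclusion [Module.Finite (MvPolynomial (Fin c) S₀) E] :
    ∃ D : ℕ, ∀ m : ℕ, D + 2 ≤ m → ℳ m ≤ WW c ℳ (m - 2) := by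
  classical
  obtain ⟨s, hs⟩ := Module.Finite.fg_top (R := MvPolynomial (Fin c) S₀) (M := E)
  set D : ℕ := s.sup (fun v => (DirectSum.decompose ℳ v).support.sup id) with hD
  refine ⟨D, ?_⟩
  intro m hm
  -- the set of "generators": homogeneous elements of degree ≤ D
  set U : Set E := ⋃ k ∈ Finset.range (D + 1), ((ℳ k : Set E)) with hU
  have hspanU : Submodule.span (MvPolynomial (Fin c) S₀) U = ⊤ := by
    rw [eq_top_iff, ← hs, Submodule.span_le]
    intro v hv
    have := DirectSum.sum_support_decompose ℳ v
    rw [← this]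
    refine Submodule.sum_mem _ ?_
    intro n hn
    refine Submodule.subset_span ?_
    have hnD : n ≤ D := by
      refine le_trans ?_ (Finset.le_sup (f := fun v => (DirectSum.decompose ℳ v).support.sup id) hv)
      exact Finset.le_sup (f := id) hn
    refine Set.mem_iUnion₂.mpr ⟨n, Finset.mem_range.mpr (by omega), ?_⟩
    exact (DirectSum.decompose ℳ v n).2
  -- the set of all `a • g` for `g ∈ U`
  set T : Set E := {e | ∃ a : MvPolynomial (Fin c) S₀, ∃ g ∈ U, e = a • g} with hT
  have hsub : (⊤ : Submodule (MvPolynomial (Fin c) S₀) E).carrier ⊆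
      (Submodule.span S₀ T : Set E) := by
    rw [← hspanU]
    intro z hz
    refine Submodule.span_induction ?_ ?_ ?_ ?_ hz
    · intro g hg
      exact Submodule.subset_span ⟨1, g, hg, (one_smul _ _).symm⟩
    · exact Submodule.zero_mem _
    · intro x y _ _ hx hy; exact Submodule.add_mem _ hx hy
    · intro a x _ hx
      refine Submodule.span_induction ?_ ?_ ?_ ?_ hx
      · rintro t ⟨b, g, hg, rfl⟩
        exact Submodule.subset_span ⟨a * b, g, hg, (mul_smul a b g).symm⟩
      · rw [smul_zero]; exact Submodule.zero_mem _
      · intro x y _ _ hx hy; rw [smul_add]; exact Submodule.add_mem _ hx hy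
      · intro r x _ hx
        rw [smul_comm a r x]
        exact Submodule.smul_mem _ r hx
  intro y hy
  have hyT : y ∈ Submodule.span S₀ T := hsub trivial
  have hproj : proj ℳ m y ∈ WW c ℳ (m - 2) := by
    have : Submodule.map (proj ℳ m) (Submodule.span S₀ T) ≤ WW c ℳ (m - 2) := by
      rw [Submodule.map_span, Submodule.span_le]
      rintro _ ⟨t, ⟨a, g, hg, rfl⟩, rfl⟩
      obtain ⟨_, ⟨k, rfl⟩, _, ⟨hk, rfl⟩, hgk⟩ := hg
      rw [Finset.mem_range] at hk
      have hkm : k + 2 ≤ m := by omega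
      rw [proj_apply]
      exact comp_smul_mem c ℳ hkm a hgk
    exact this (Submodule.mem_map_of_mem hyT)
  rwa [proj_apply, DirectSum.decompose_of_mem_same ℳ hy] at hproj

theorem ann_mono {m : ℕ} (h : ℳ m ≤ WW c ℳ (m - 2)) :
    Module.annihilator S₀ (ℳ (m - 2)) ≤ Module.annihilator S₀ (ℳ m) := by
  intro r hr
  rw [Module.mem_annihilator] at hr ⊢
  rintro ⟨x, hx⟩
  have hx' : x ∈ WW c ℳ (m - 2) := h hx
  have hzero : r • x = 0 := by
    have hle : WW c ℳ (m - 2) ≤ LinearMap.ker (LinearMap.lsmul S₀ E r) := by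
      refine iSup_le ?_
      rintro i _ ⟨e, he, rfl⟩
      have hre : r • e = 0 := by
        have := hr ⟨e, he⟩
        exact congrArg Subtype.val this
      simp only [LinearMap.mem_ker, LinearMap.lsmul_apply, smulX, LinearMap.coe_mk,
        AddHom.coe_mk]
      rw [smul_comm, hre, smul_zero]
    simpa using hle hx'
  exact Subtype.ext (by simpa using hzero)

end Aux

/-- Corollary 2.4: if `S₀` is Noetherian of finite Krull dimension,
`S = S₀[X₁,…,X_c]` is graded with `deg Xᵢ = 2`, and `E = ⊕ₙ Eₙ` is a finitely generated
graded `S`-module, then for `j ∈ {0,1}` the dimension `dim_{S₀} E_{2n+j}` is constant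
for `n ≫ 0`. -/
theorem dim_even_odd_components_eventually_constant
    (S₀ : Type u) [CommRing S₀] [IsNoetherianRing S₀] (hdim : ringKrullDim S₀ < ⊤)
    (c : ℕ)
    (E : Type u) [AddCommGroup E] [Module (MvPolynomial (Fin c) S₀) E] [Module S₀ E]
    [IsScalarTower S₀ (MvPolynomial (Fin c) S₀) E]
    [Module.Finite (MvPolynomial (Fin c) S₀) E]
    (ℳ : ℕ → Submodule S₀ E) [DirectSum.Decomposition ℳ]
    [SetLike.GradedSMul
      (MvPolynomial.weightedHomogeneousSubmodule S₀ (fun _ : Fin c => (2 : ℕ))) ℳ] :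
    ∀ j ∈ ({0, 1} : Set ℕ), ∃ N : ℕ, ∀ n : ℕ, N ≤ n →
      dimOf S₀ (ℳ (2 * n + j)) = dimOf S₀ (ℳ (2 * N + j)) := by
  intro j hj
  obtain ⟨D, hD⟩ := main_inclusion c ℳ
  set N₀ : ℕ := D + 2 with hN₀
  have hstep : ∀ n : ℕ, N₀ ≤ n → Module.annihilator S₀ (ℳ (2 * n + j)) ≤
      Module.annihilator S₀ (ℳ (2 * (n + 1) + j)) := by
    intro n hn
    have h1 : D + 2 ≤ 2 * (n + 1) + j := by omega
    have h2 : 2 * (n + 1) + j - 2 = 2 * n + j := by omega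
    have := ann_mono c ℳ (hD _ h1)
    rwa [h2] at this
  set f : ℕ →o Ideal S₀ :=
    ⟨fun k => Module.annihilator S₀ (ℳ (2 * (N₀ + k) + j)),
      monotone_nat_of_le_succ (fun k => hstep (N₀ + k) (by omega))⟩ with hf
  obtain ⟨n₀, hn₀⟩ := monotone_stabilizes_iff_noetherian.mpr
    (inferInstance : IsNoetherian S₀ S₀) f
  refine ⟨N₀ + n₀, ?_⟩
  intro n hn
  have hann : Module.annihilator S₀ (ℳ (2 * n + j)) =
      Module.annihilator S₀ (ℳ (2 * (N₀ + n₀) + j)) := by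
    have h1 : 2 * n + j = 2 * (N₀ + (n - N₀)) + j := by omega
    have h2 := hn₀ (n - N₀) (by omega)
    rw [h1]
    exact (h2.symm : f (n - N₀) = f n₀)
  unfold dimOf
  rw [hann]
end

section
/- Let A be a commutative ring, I an ideal of A, and let (N_n)_{n≥0} be a descending chain of submodules of an A-module (N_{n+1} ⊆ N_n for all n) satisfying I·N_n ⊆ N_{n+1} for all n. Suppose there exists h ≥ 0 such that N_n = I·N_{n-1} + N_{n+1} for all n ≥ h+1, and suppose there exists r₀ such that N_r = I·N_{r-1} for all r ≥ r₀. Then N_n = I·N_{n-1} for all n ≥ h+1; consequently N_n = I^{n-h}·N_h for all n ≥ h. -/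
/-!
Descending induction from the range where the chain is already `I`-stable: if
`N (n + 1) = I • N n`, then `N (n + 1) ≤ I • N (n - 1)`, so the summand `N (n + 1)` in
`N n = I • N (n - 1) ⊔ N (n + 1)` is redundant. Iterating `N (n + 1) = I • N n` upwards
from `h` gives the powers `I ^ (n - h)`.
-/

universe u

theorem Nat.decreasing_induction_of_eventually {P : ℕ → Prop} {m : ℕ}
    (hev : ∃ r, ∀ n, r ≤ n → P n) (step : ∀ n, m ≤ n → P (n + 1) → P n) :
    ∀ n, m ≤ n → P n := by
  obtain ⟨r, hr⟩ := hev
  intro n hn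
  exact Nat.decreasingInduction' (fun k _ hnk => step k (hn.trans hnk)) (le_max_left n r)
    (hr _ (le_max_right n r))

namespace Submodule

variable {A W : Type*} [CommRing A] [AddCommGroup W] [Module A W] (I : Ideal A)

theorem eq_smul_of_le_of_eq_smul_sup_smul {P Q : Submodule A W} (hQP : Q ≤ P)
    (hQ : Q = I • P ⊔ I • Q) : Q = I • P :=
  hQ.trans (sup_eq_left.mpr (smul_mono_right I hQP))

theorem eq_pow_smul_of_eq_smul {N : ℕ → Submodule A W} {h : ℕ}
    (hN : ∀ n, h ≤ n → N (n + 1) = I • N n) (k : ℕ) : N (h + k) = I ^ k • N h := by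
  induction k with
  | zero => simp
  | succ k ih => rw [← add_assoc, hN _ (Nat.le_add_right h k), ih, pow_succ', Submodule.mul_smul]

end Submodule

theorem submodule_chain_stabilizes_general
    (A : Type u) [CommRing A] (W : Type u) [AddCommGroup W] [Module A W]
    (I : Ideal A) (N : ℕ → Submodule A W)
    (hdesc : ∀ n : ℕ, N (n + 1) ≤ N n)
    (h : ℕ)
    (hmid : ∀ n : ℕ, h + 1 ≤ n → N n = I • N (n - 1) ⊔ N (n + 1))
    (hstab : ∃ r₀ : ℕ, ∀ r : ℕ, r₀ ≤ r → N r = I • N (r - 1)) :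
    (∀ n : ℕ, h + 1 ≤ n → N n = I • N (n - 1)) ∧
      (∀ n : ℕ, h ≤ n → N n = I ^ (n - h) • N h) := by
  have step_down : ∀ n, h + 1 ≤ n → N (n + 1) = I • N n → N n = I • N (n - 1) := by
    intro n hn hsucc
    have hle : N n ≤ N (n - 1) := by
      simpa [Nat.sub_add_cancel (by omega : 1 ≤ n)] using hdesc (n - 1)
    refine Submodule.eq_smul_of_le_of_eq_smul_sup_smul I hle ?_
    rw [← hsucc]
    exact hmid n hn
  have stable : ∀ n, h + 1 ≤ n → N n = I • N (n - 1) :=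
    Nat.decreasing_induction_of_eventually hstab fun n hn ih =>
      step_down n hn (by simpa using ih)
  refine ⟨stable, fun n hn => ?_⟩
  obtain ⟨k, rfl⟩ := Nat.exists_eq_add_of_le hn
  rw [Nat.add_sub_cancel_left]
  exact Submodule.eq_pow_smul_of_eq_smul I
    (fun n hn => by simpa using stable (n + 1) (by omega)) k

/-- The key lattice-theoretic step in the proof of Theorem 1.8 (strong syzygetic
Artin–Rees): if `(Nₙ)` is a descending chain of submodules with `I·Nₙ ⊆ Nₙ₊₁`,
if `Nₙ = I·Nₙ₋₁ + Nₙ₊₁` for all `n ≥ h+1`, and if `Nᵣ = I·Nᵣ₋₁` for all large `r`,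
then `Nₙ = I·Nₙ₋₁` for all `n ≥ h+1`, and consequently `Nₙ = I^{n-h}·N_h` for `n ≥ h`. -/
theorem submodule_chain_stabilizes
    (A : Type u) [CommRing A] (W : Type u) [AddCommGroup W] [Module A W]
    (I : Ideal A) (N : ℕ → Submodule A W)
    (hdesc : ∀ n : ℕ, N (n + 1) ≤ N n)
    (hIN : ∀ n : ℕ, I • N n ≤ N (n + 1))
    (h : ℕ)
    (hmid : ∀ n : ℕ, h + 1 ≤ n → N n = I • N (n - 1) ⊔ N (n + 1))
    (hstab : ∃ r₀ : ℕ, ∀ r : ℕ, r₀ ≤ r → N r = I • N (r - 1)) :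
    (∀ n : ℕ, h + 1 ≤ n → N n = I • N (n - 1)) ∧
      (∀ n : ℕ, h ≤ n → N n = I ^ (n - h) • N h) :=
  submodule_chain_stabilizes_general A W I N hdesc h hmid hstab
end

section
/- Let k be an algebraically closed field and let n, r be natural numbers with n ≥ r + 3. Let J be a homogeneous ideal of the polynomial ring k[X₀,…,X_n] such that the Krull dimension of k[X₀,…,X_n]/J is r + 1, and let Z ⊆ k^{n+1} be the affine cone of common zeros of J (so Z corresponds to a closed subvariety X of ℙⁿ(k) of dimension r). Then there exist |k|-many distinct planes in ℙⁿ(k) disjoint from X; that is, there is an injective map from k to the set of 3-dimensional k-linear subspaces W of k^{n+1} with W ∩ Z = {0}. -/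
universe u

attribute [local instance] MvPolynomial.gradedAlgebra

open MvPolynomial
-- avoidance lemma
theorem aux_avoid {k M : Type*} [Field k] [Infinite k] [AddCommGroup M] [Module k M]
    (S : Set (Submodule k M)) (hfin : S.Finite) :
    (∀ p ∈ S, p ≠ ⊤) → ∃ v : M, ∀ p ∈ S, v ∉ p := by
  refine Set.Finite.induction_on (motive := fun S _ => (∀ p ∈ S, p ≠ ⊤) → ∃ v : M, ∀ p ∈ S, v ∉ p) S hfin (fun _ => ⟨0, by simp⟩) ?_
  rintro p S hpS hSfin IH hS
  obtain ⟨v, hv⟩ := IH (fun q hq => hS q (Set.mem_insert_of_mem _ hq))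
  have hp : p ≠ ⊤ := hS p (Set.mem_insert _ _)
  by_cases hvp : v ∉ p
  · refine ⟨v, ?_⟩
    rintro q (rfl | hq)
    · exact hvp
    · exact hv q hq
  push_neg at hvp
  obtain ⟨w, -, hw⟩ := SetLike.exists_of_lt (lt_top_iff_ne_top.mpr hp : p < (⊤ : Submodule k M))
  have hBq : ∀ q ∈ S, {c : k | v + c • w ∈ q}.Subsingleton := by
    intro q hq c hc c' hc'
    by_contra hne
    have hwq : w ∈ q := by
      have h1 : (c - c') • w ∈ q := by
        have := q.sub_mem hc hc'
        simpa [sub_smul, add_sub_add_left_eq_sub] using this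
      have := q.smul_mem (c - c')⁻¹ h1
      rwa [inv_smul_smul₀ (sub_ne_zero.mpr hne)] at this
    exact hv q hq (by simpa using q.sub_mem hc (q.smul_mem c hwq))
  have hBfin : ({c : k | v + c • w ∈ p} ∪ ⋃ q ∈ S, {c : k | v + c • w ∈ q}).Finite := by
    refine Set.Finite.union ?_ (Set.Finite.biUnion hSfin fun q hq => (hBq q hq).finite)
    refine Set.Finite.subset (Set.finite_singleton 0) ?_
    intro c hc
    simp only [Set.mem_singleton_iff]
    by_contra hc0
    have : c • w ∈ p := by simpa using p.sub_mem hc hvp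
    exact hw (by simpa [inv_smul_smul₀ hc0] using p.smul_mem c⁻¹ this)
  obtain ⟨c, hc⟩ := (hBfin.infinite_compl).nonempty
  refine ⟨v + c • w, ?_⟩
  rintro q (rfl | hq)
  · exact fun h => hc (Set.mem_union_left _ h)
  · exact fun h => hc (Set.mem_union_right _ (Set.mem_biUnion hq h))


noncomputable section

variable {k : Type*} [CommRing k] {N : ℕ}

/-- The linear polynomial with coefficient vector `c`. -/
def linForm (c : Fin N → k) : MvPolynomial (Fin N) k := ∑ i, C (c i) * X i

lemma eval_linForm (c v : Fin N → k) : eval v (linForm c) = ∑ i, c i * v i := by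
  simp [linForm]

lemma linForm_isHomogeneous (c : Fin N → k) :
    linForm c ∈ homogeneousSubmodule (Fin N) k 1 := by
  rw [mem_homogeneousSubmodule]
  exact IsHomogeneous.sum _ _ _ fun i _ => isHomogeneous_C_mul_X _ _

lemma linForm_single (i : Fin N) : linForm (Pi.single i (1:k)) = X i := by
  classical
  rw [linForm]
  rw [Finset.sum_eq_single i]
  · simp
  · intro j _ hj
    simp [Pi.single_apply, hj.symm]
  · simp

/-- `linForm` as a linear map. -/
def linFormL : (Fin N → k) →ₗ[k] MvPolynomial (Fin N) k where
  toFun := linForm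
  map_add' c d := by simp [linForm, map_add, add_mul, Finset.sum_add_distrib]
  map_smul' a c := by
    simp only [linForm, RingHom.id_apply, Finset.smul_sum, Pi.smul_apply, smul_eq_mul, C_mul]
    refine Finset.sum_congr rfl fun i _ => ?_
    rw [Algebra.smul_def, algebraMap_eq, mul_assoc]

/-- dot product as linear functional -/
def dotL (c : Fin N → k) : (Fin N → k) →ₗ[k] k where
  toFun v := ∑ i, c i * v i
  map_add' v w := by simp [mul_add, Finset.sum_add_distrib]
  map_smul' a v := by
    simp only [Pi.smul_apply, smul_eq_mul, RingHom.id_apply, Finset.mul_sum]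
    exact Finset.sum_congr rfl fun i _ => by ring

end

noncomputable section
variable {k : Type*} [CommRing k] {N : ℕ}

lemma isHomogeneous_eval_smul {φ : MvPolynomial (Fin N) k} {m : ℕ}
    (hφ : φ.IsHomogeneous m) (c : k) (v : Fin N → k) :
    eval (c • v) φ = c ^ m * eval v φ := by
  rw [eval_eq, eval_eq, Finset.mul_sum]
  refine Finset.sum_congr rfl fun d hd => ?_
  have hdeg : ∑ i ∈ d.support, d i = m := by
    have h1 := hφ (mem_support_iff.mp hd)
    rw [Finsupp.weight_apply, Finsupp.sum] at h1
    simpa using h1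
  calc coeff d φ * ∏ i ∈ d.support, (c • v) i ^ d i
      = coeff d φ * ∏ i ∈ d.support, (c ^ d i * v i ^ d i) := by
        simp [Pi.smul_apply, smul_eq_mul, mul_pow]
    _ = c ^ m * (coeff d φ * ∏ i ∈ d.support, v i ^ d i) := by
        rw [Finset.prod_mul_distrib, Finset.prod_pow_eq_pow_sum, hdeg]; ring
end

attribute [local instance] MvPolynomial.gradedAlgebra

noncomputable section
variable {k : Type*} [CommRing k] {N : ℕ}

lemma homog_ideal_eval_smul_zero {I : Ideal (MvPolynomial (Fin N) k)}
    (hI : I.IsHomogeneous (homogeneousSubmodule (Fin N) k)) {v : Fin N → k}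
    (hv : ∀ f ∈ I, eval v f = 0) {f : MvPolynomial (Fin N) k} (hf : f ∈ I) (c : k) :
    eval (c • v) f = 0 := by
  conv_lhs => rw [← sum_homogeneousComponent f]
  rw [map_sum]
  refine Finset.sum_eq_zero fun i _ => ?_
  have hmem : homogeneousComponent i f ∈ I := by
    have := hI i hf
    rwa [← DirectSum.Decomposition.decompose'_eq,
      MvPolynomial.decomposition.decompose'_apply] at this
  rw [isHomogeneous_eval_smul (homogeneousComponent_isHomogeneous i f) c v, hv _ hmem, mul_zero]

end

noncomputable section
variable {k : Type*} [Field k] {N : ℕ}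

/-- restriction of a polynomial to the line through `v`. -/
def lineMap (v : Fin N → k) : MvPolynomial (Fin N) k →+* Polynomial k :=
  (aeval (fun i => Polynomial.C (v i) * Polynomial.X)).toRingHom

lemma eval_lineMap (v : Fin N → k) (c : k) (f : MvPolynomial (Fin N) k) :
    (lineMap v f).eval c = eval (c • v) f := by
  induction f using MvPolynomial.induction_on with
  | C a => simp [lineMap]
  | add f g hf hg => simp [map_add, hf, hg]
  | mul_X f i hf =>
    simp only [lineMap, AlgHom.toRingHom_eq_coe, RingHom.coe_coe, map_mul, aeval_X,
      Polynomial.eval_mul, Polynomial.eval_C, Polynomial.eval_X] at hf ⊢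
    rw [hf, eval_X, Pi.smul_apply, smul_eq_mul]
    ring

/-- The (prime) ideal of polynomials vanishing on the line through `v`. -/
def lineKer (v : Fin N → k) : Ideal (MvPolynomial (Fin N) k) := RingHom.ker (lineMap v)

lemma mem_lineKer_iff [Infinite k] {v : Fin N → k} {f : MvPolynomial (Fin N) k} :
    f ∈ lineKer v ↔ ∀ c : k, eval (c • v) f = 0 := by
  constructor
  · intro h c
    rw [← eval_lineMap]
    rw [lineKer, RingHom.mem_ker] at h
    rw [h, Polynomial.eval_zero]
  · intro h
    rw [lineKer, RingHom.mem_ker]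
    exact Polynomial.zero_of_eval_zero _ fun c => by rw [eval_lineMap, h]

lemma lineKer_isPrime (v : Fin N → k) : (lineKer v).IsPrime := RingHom.ker_isPrime _

lemma lineKer_lt_pointKer [Infinite k] {v : Fin N → k} (hv : v ≠ 0) :
    lineKer v < RingHom.ker (eval v : MvPolynomial (Fin N) k →+* k) := by
  obtain ⟨i, hvi⟩ : ∃ i, v i ≠ 0 := Function.ne_iff.mp hv
  rw [SetLike.lt_iff_le_and_exists]
  refine ⟨fun f hf => ?_, X i - C (v i), ?_, ?_⟩
  · rw [RingHom.mem_ker]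
    have := (mem_lineKer_iff.mp hf) 1
    rwa [one_smul] at this
  · simp [RingHom.mem_ker]
  · intro hmem
    have := mem_lineKer_iff.mp hmem 0
    rw [zero_smul] at this
    simp only [map_sub, eval_X, eval_C, Pi.zero_apply, zero_sub, neg_eq_zero] at this
    exact hvi this

lemma span_of_lineKer_eq [Infinite k] {v w : Fin N → k} (hv : v ≠ 0)
    (h : lineKer v = lineKer w) : w ∈ Submodule.span k {v} := by
  obtain ⟨i, hvi⟩ : ∃ i, v i ≠ 0 := Function.ne_iff.mp hv
  by_contra hw
  have hj : ∃ j, v i * w j ≠ v j * w i := by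
    by_contra hall
    push_neg at hall
    refine hw (Submodule.mem_span_singleton.mpr ⟨w i / v i, funext fun j => ?_⟩)
    have := hall j
    rw [Pi.smul_apply, smul_eq_mul, div_mul_eq_mul_div, div_eq_iff hvi]
    linear_combination -this
  obtain ⟨j, hj⟩ := hj
  have hfv : (C (v i) * X j - C (v j) * X i : MvPolynomial (Fin N) k) ∈ lineKer v := by
    rw [mem_lineKer_iff]
    intro c
    simp only [map_sub, map_mul, eval_C, eval_X, Pi.smul_apply, smul_eq_mul]
    ring
  rw [h, mem_lineKer_iff] at hfv
  have := hfv 1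
  rw [one_smul] at this
  simp only [map_sub, map_mul, eval_C, eval_X] at this
  exact hj (sub_eq_zero.mp this)

end

noncomputable section
variable {k : Type*} [Field k] {N : ℕ}

/-- the plane (3-dim subspace) associated to parameter `a`. -/
def planeAt (u : Fin 4 → (Fin N → k)) (a : k) : Submodule k (Fin N → k) :=
  Submodule.span k (Set.range fun j : Fin 3 => u j.succ - a ^ ((j : ℕ) + 1) • u 0)

lemma sum3_expand (u : Fin 4 → (Fin N → k)) (a : k) (y : Fin 3 → k) :
    (∑ j : Fin 3, y j • (u j.succ - a ^ ((j : ℕ) + 1) • u 0)) =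
      y 0 • (u 1 - a ^ 1 • u 0) + y 1 • (u 2 - a ^ 2 • u 0) + y 2 • (u 3 - a ^ 3 • u 0) := by
  rw [Fin.sum_univ_three]
  rfl

lemma mem_planeAt_iff {u : Fin 4 → (Fin N → k)} {a : k} {v : Fin N → k} :
    v ∈ planeAt u a ↔ ∃ x : Fin 4 → k,
      (∑ i, x i • u i = v) ∧ x 0 + x 1 * a + x 2 * a ^ 2 + x 3 * a ^ 3 = 0 := by
  rw [planeAt, Submodule.mem_span_range_iff_exists_fun]
  constructor
  · rintro ⟨y, rfl⟩
    refine ⟨![-(y 0 * a + y 1 * a ^ 2 + y 2 * a ^ 3), y 0, y 1, y 2], ?_, ?_⟩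
    · rw [Fin.sum_univ_four, sum3_expand]
      simp only [Matrix.cons_val_zero, Matrix.cons_val_one, Matrix.head_cons,
        Matrix.cons_val_two, Matrix.tail_cons, Matrix.cons_val_three]
      module
    · simp only [Matrix.cons_val_zero, Matrix.cons_val_one, Matrix.head_cons,
        Matrix.cons_val_two, Matrix.tail_cons, Matrix.cons_val_three]
      ring
  · rintro ⟨x, rfl, hrel⟩
    refine ⟨fun j => x j.succ, ?_⟩
    have hx0 : x 0 = -(x 1 * a + x 2 * a ^ 2 + x 3 * a ^ 3) := by linear_combination hrel
    rw [sum3_expand, Fin.sum_univ_four, hx0]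
    show x 1 • (u 1 - a ^ 1 • u 0) + x 2 • (u 2 - a ^ 2 • u 0) + x 3 • (u 3 - a ^ 3 • u 0) = _
    module

lemma coords_eq {u : Fin 4 → (Fin N → k)} (hu : LinearIndependent k u) {x y : Fin 4 → k}
    (h : ∑ i, x i • u i = ∑ i, y i • u i) : x = y := by
  have h0 : ∑ i, (x i - y i) • u i = 0 := by
    simp only [sub_smul, Finset.sum_sub_distrib, h, sub_self]
  have := Fintype.linearIndependent_iff.mp hu _ h0
  funext i
  exact sub_eq_zero.mp (this i)

lemma planeAt_linearIndependent {u : Fin 4 → (Fin N → k)} (hu : LinearIndependent k u) (a : k) :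
    LinearIndependent k (fun j : Fin 3 => u j.succ - a ^ ((j : ℕ) + 1) • u 0) := by
  rw [Fintype.linearIndependent_iff]
  intro y hy
  have hcoords : (![-(y 0 * a + y 1 * a ^ 2 + y 2 * a ^ 3), y 0, y 1, y 2] : Fin 4 → k)
      = fun _ => (0 : k) := by
    refine coords_eq hu ?_
    rw [Fin.sum_univ_four]
    simp only [Matrix.cons_val_zero, Matrix.cons_val_one, Matrix.head_cons,
      Matrix.cons_val_two, Matrix.tail_cons, Matrix.cons_val_three, zero_smul, add_zero]
    rw [sum3_expand] at hy
    simp only [zero_smul, add_zero, Finset.sum_const_zero]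
    calc _ = y 0 • (u 1 - a ^ 1 • u 0) + y 1 • (u 2 - a ^ 2 • u 0) + y 2 • (u 3 - a ^ 3 • u 0) := by
          module
      _ = 0 := hy
  intro j
  fin_cases j
  · exact congrFun hcoords 1
  · exact congrFun hcoords 2
  · exact congrFun hcoords 3

lemma planeAt_finrank {u : Fin 4 → (Fin N → k)} (hu : LinearIndependent k u) (a : k) :
    Module.finrank k (planeAt u a) = 3 := by
  rw [planeAt, finrank_span_eq_card (planeAt_linearIndependent hu a), Fintype.card_fin]

lemma planeAt_le {u : Fin 4 → (Fin N → k)} {a : k} {W : Submodule k (Fin N → k)}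
    (hW : ∀ i, u i ∈ W) : planeAt u a ≤ W := by
  rw [planeAt, Submodule.span_le]
  rintro _ ⟨j, rfl⟩
  exact W.sub_mem (hW _) (W.smul_mem _ (hW 0))

lemma planeAt_injective {u : Fin 4 → (Fin N → k)} (hu : LinearIndependent k u) :
    Function.Injective (planeAt u) := by
  intro a b h
  have hmem : u 1 - a ^ 1 • u 0 ∈ planeAt u a := Submodule.subset_span ⟨0, rfl⟩
  rw [h, mem_planeAt_iff] at hmem
  obtain ⟨x, hsum, hrel⟩ := hmem
  have hx : x = ![-a, 1, 0, 0] := by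
    refine coords_eq hu (hsum.trans ?_)
    rw [Fin.sum_univ_four]
    simp only [Matrix.cons_val_zero, Matrix.cons_val_one, Matrix.head_cons,
      Matrix.cons_val_two, Matrix.tail_cons, Matrix.cons_val_three]
    module
  rw [hx] at hrel
  simp only [Matrix.cons_val_zero, Matrix.cons_val_one, Matrix.head_cons,
    Matrix.cons_val_two, Matrix.tail_cons, Matrix.cons_val_three] at hrel
  linear_combination -hrel

lemma planeAt_mem_finite {u : Fin 4 → (Fin N → k)} (hu : LinearIndependent k u)
    {w : Fin N → k} (hw : w ≠ 0) : {a : k | w ∈ planeAt u a}.Finite := by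
  by_contra hinf
  replace hinf : {a : k | w ∈ planeAt u a}.Infinite := hinf
  obtain ⟨a₀, ha₀⟩ := hinf.nonempty
  obtain ⟨x₀, hx₀sum, -⟩ := mem_planeAt_iff.mp ha₀
  have hrel : ∀ a ∈ {a : k | w ∈ planeAt u a},
      x₀ 0 + x₀ 1 * a + x₀ 2 * a ^ 2 + x₀ 3 * a ^ 3 = 0 := by
    intro a ha
    obtain ⟨x, hxsum, hxrel⟩ := mem_planeAt_iff.mp ha
    rwa [coords_eq hu (hxsum.trans hx₀sum.symm)] at hxrel
  set q : Polynomial k := ∑ i : Fin 4, Polynomial.C (x₀ i) * Polynomial.X ^ (i : ℕ) with hq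
  have hq0 : q = 0 := by
    refine Polynomial.eq_zero_of_infinite_isRoot _ (hinf.mono ?_)
    intro a ha
    have := hrel a ha
    simp only [Set.mem_setOf_eq, Polynomial.IsRoot, hq, Polynomial.eval_finset_sum,
      Polynomial.eval_mul, Polynomial.eval_C, Polynomial.eval_pow, Polynomial.eval_X]
    rw [Fin.sum_univ_four]
    have e0 : ((0 : Fin 4) : ℕ) = 0 := rfl
    have e1 : ((1 : Fin 4) : ℕ) = 1 := rfl
    have e2 : ((2 : Fin 4) : ℕ) = 2 := rfl
    have e3 : ((3 : Fin 4) : ℕ) = 3 := rfl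
    rw [e0, e1, e2, e3]
    norm_num
    linear_combination this
  have hx₀ : ∀ i : Fin 4, x₀ i = 0 := by
    intro i
    have := congrArg (fun p => Polynomial.coeff p (i : ℕ)) hq0
    simp only [hq, Polynomial.finset_sum_coeff, Polynomial.coeff_C_mul,
      Polynomial.coeff_X_pow, Polynomial.coeff_zero] at this
    rw [Fin.sum_univ_four] at this
    have e0 : ((0 : Fin 4) : ℕ) = 0 := rfl
    have e1 : ((1 : Fin 4) : ℕ) = 1 := rfl
    have e2 : ((2 : Fin 4) : ℕ) = 2 := rfl
    have e3 : ((3 : Fin 4) : ℕ) = 3 := rfl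
    rw [e0, e1, e2, e3] at this
    fin_cases i <;> simpa using this
  refine hw ?_
  rw [← hx₀sum]
  rw [show x₀ = fun _ => (0:k) from funext hx₀]
  simp


/-- Theorem 17.2 (appendix): if `k` is algebraically closed, `n ≥ r + 3`, and `X ⊆ ℙⁿ(k)`
is a closed subvariety of dimension `r`, given by a homogeneous ideal `J` of
`k[X₀,…,Xₙ]` with `dim k[X₀,…,Xₙ]/J = r + 1` and affine cone `Z ⊆ k^{n+1}`, then there
are `|k|`-many distinct planes of `ℙⁿ(k)` disjoint from `X`: there is an injection from `k`
into the set of 3-dimensional linear subspaces `W ⊆ k^{n+1}` with `W ∩ Z = {0}`. -/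
theorem exists_many_planes_disjoint_from_projective_variety
    (k : Type u) [Field k] [IsAlgClosed k]
    (n r : ℕ) (hnr : r + 3 ≤ n)
    (J : Ideal (MvPolynomial (Fin (n + 1)) k))
    (hJhom : Ideal.IsHomogeneous (MvPolynomial.homogeneousSubmodule (Fin (n + 1)) k) J)
    (hJdim : ringKrullDim (MvPolynomial (Fin (n + 1)) k ⧸ J) = (r + 1 : ℕ)) :
    ∃ g : k → Submodule k (Fin (n + 1) → k),
      Function.Injective g ∧
        ∀ a : k, Module.finrank k (g a) = 3 ∧
          (g a : Set (Fin (n + 1) → k)) ∩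
              {v : Fin (n + 1) → k | ∀ f ∈ J, MvPolynomial.eval v f = 0} = {0} := by
  classical
  set Zset : Set (Fin (n + 1) → k) := {v | ∀ f ∈ J, eval v f = 0} with hZset
  -- `J` is a proper ideal
  have hJtop : J ≠ ⊤ := by
    intro h
    rw [h] at hJdim
    haveI : Subsingleton (MvPolynomial (Fin (n + 1)) k ⧸ (⊤ : Ideal (MvPolynomial (Fin (n + 1)) k))) :=
      Ideal.Quotient.subsingleton_iff.mpr rfl
    rw [ringKrullDim_eq_bot_of_subsingleton] at hJdim
    exact absurd hJdim.symm (by simp)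
  -- decompose membership
  have hdecomp : ∀ (I : Ideal (MvPolynomial (Fin (n + 1)) k)),
      Ideal.IsHomogeneous (homogeneousSubmodule (Fin (n + 1)) k) I →
      ∀ f ∈ I, ∀ i, homogeneousComponent i f ∈ I := by
    intro I hI f hf i
    have := hI i hf
    rwa [← DirectSum.Decomposition.decompose'_eq,
      MvPolynomial.decomposition.decompose'_apply] at this
  -- 0 is in the cone
  have h0Z : (0 : Fin (n + 1) → k) ∈ Zset := by
    intro f hf
    have hc : C (coeff 0 f) ∈ J := by
      have := hdecomp J hJhom f hf 0
      rwa [homogeneousComponent_zero] at this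
    have hcc : coeff 0 f = 0 := by
      by_contra hne
      exact hJtop (J.eq_top_of_isUnit_mem hc ((isUnit_iff_ne_zero.mpr hne).map C))
    show eval 0 f = 0
    rw [eval_zero, constantCoeff_eq]
    exact hcc
  -- the irrelevant maximal ideal
  set mI : Ideal (MvPolynomial (Fin (n + 1)) k) :=
    RingHom.ker (eval (0 : Fin (n + 1) → k) : MvPolynomial (Fin (n + 1)) k →+* k) with hmI
  have hmMax : mI.IsMaximal := RingHom.ker_isMaximal_of_surjective _ (fun a => ⟨C a, eval_C a⟩)
  have hXmem : ∀ (P : Ideal (MvPolynomial (Fin (n + 1)) k)), (∀ i, X i ∈ P) → mI ≤ P := by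
    intro P hX f hf
    rw [hmI, RingHom.mem_ker, eval_zero, constantCoeff_eq] at hf
    have hmem : f ∈ Ideal.span (MvPolynomial.X '' (Set.univ : Set (Fin (n + 1)))) := by
      rw [MvPolynomial.mem_ideal_span_X_image]
      intro d hd
      have hdne : d ≠ 0 := by
        rintro rfl
        exact (mem_support_iff.mp hd) hf
      obtain ⟨i, hi⟩ := Finsupp.ne_iff.mp hdne
      exact ⟨i, Set.mem_univ i, by simpa using hi⟩
    refine Ideal.span_le.mpr ?_ hmem
    rintro _ ⟨i, -, rfl⟩
    exact hX i
  -- prime avoidance for linear forms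
  have avoid : ∀ I : Ideal (MvPolynomial (Fin (n + 1)) k),
      ∃ c : Fin (n + 1) → k, ∀ P ∈ I.minimalPrimes, P ≠ mI → linForm c ∉ P := by
    intro I
    have hfin : I.minimalPrimes.Finite := by
      rw [Ideal.minimalPrimes_eq_comap]
      exact (minimalPrimes.finite_of_isNoetherianRing _).image _
    set Sset : Set (Submodule k (Fin (n + 1) → k)) :=
      (fun P : Ideal (MvPolynomial (Fin (n + 1)) k) =>
        Submodule.comap linFormL (Submodule.restrictScalars k P)) ''
        {P | P ∈ I.minimalPrimes ∧ P ≠ mI} with hSset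
    have hSfin : Sset.Finite := (hfin.subset (fun P hP => hP.1)).image _
    have hproper : ∀ p ∈ Sset, p ≠ ⊤ := by
      rintro _ ⟨P, ⟨hPmin, hPne⟩, rfl⟩ htop
      haveI hPp : P.IsPrime := hPmin.1.1
      have hX : ∀ i, X i ∈ P := by
        intro i
        change Submodule.comap linFormL (Submodule.restrictScalars k P) = ⊤ at htop
        have h1 : (Pi.single i (1 : k)) ∈
            Submodule.comap linFormL (Submodule.restrictScalars k P) := by
          rw [htop]; trivial
        rw [Submodule.mem_comap] at h1
        have h2 : linForm (Pi.single i (1 : k)) ∈ P := h1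
        rwa [linForm_single] at h2
      exact hPne (hmMax.eq_of_le hPp.ne_top (hXmem P hX)).symm
    obtain ⟨c, hc⟩ := aux_avoid Sset hSfin hproper
    refine ⟨c, fun P hP hPne hmem => hc _ ⟨P, ⟨hP, hPne⟩, rfl⟩ ?_⟩
    rw [Submodule.mem_comap]
    exact hmem
  -- chains of primes over an ideal
  set Chains : Ideal (MvPolynomial (Fin (n + 1)) k) → ℕ → Prop := fun I d =>
    ∃ cc : Fin (d + 1) → Ideal (MvPolynomial (Fin (n + 1)) k),
      StrictMono cc ∧ (∀ i, (cc i).IsPrime) ∧ I ≤ cc 0 with hChains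
  -- base bound from the Krull dimension hypothesis
  have base : ∀ d, Chains J d → d ≤ r + 1 := by
    rintro d ⟨cc, hmono, hprime, hle⟩
    have hker : ∀ i, RingHom.ker (Ideal.Quotient.mk J) ≤ cc i := by
      intro i
      rw [Ideal.mk_ker]
      exact hle.trans (hmono.monotone (Fin.zero_le i))
    have hprimeq : ∀ i : Fin (d + 1),
        ((cc i).map (Ideal.Quotient.mk J)).IsPrime := by
      intro i
      haveI := hprime i
      exact Ideal.map_isPrime_of_surjective Ideal.Quotient.mk_surjective (hker i)
    set cq : Fin (d + 1) → PrimeSpectrum (MvPolynomial (Fin (n + 1)) k ⧸ J) := fun i =>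
      ⟨(cc i).map (Ideal.Quotient.mk J), hprimeq i⟩ with hcq
    have hcqmono : StrictMono cq := by
      intro i j hij
      have hle' : (cc i).map (Ideal.Quotient.mk J) ≤ (cc j).map (Ideal.Quotient.mk J) :=
        Ideal.map_mono (hmono hij).le
      have hne : (cc i).map (Ideal.Quotient.mk J) ≠ (cc j).map (Ideal.Quotient.mk J) := by
        intro h
        have h2 := congrArg (Ideal.comap (Ideal.Quotient.mk J)) h
        rw [Ideal.comap_map_of_surjective _ Ideal.Quotient.mk_surjective,
          Ideal.comap_map_of_surjective _ Ideal.Quotient.mk_surjective] at h2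
        have hki : Ideal.comap (Ideal.Quotient.mk J) ⊥ ≤ cc i := hker i
        have hkj : Ideal.comap (Ideal.Quotient.mk J) ⊥ ≤ cc j := hker j
        rw [sup_eq_left.mpr hki, sup_eq_left.mpr hkj] at h2
        exact (hmono hij).ne h2
      exact lt_of_le_of_ne hle' (fun h => hne (congrArg PrimeSpectrum.asIdeal h))
    have hlen := Order.LTSeries.length_le_krullDim (LTSeries.mk d cq hcqmono)
    have hJdim' : Order.krullDim (PrimeSpectrum (MvPolynomial (Fin (n + 1)) k ⧸ J)) =
        ((r + 1 : ℕ) : WithBot ℕ∞) := hJdim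
    rw [hJdim'] at hlen
    exact_mod_cast hlen
  -- main cutting induction
  have main : ∀ s : ℕ, ∃ (I : Ideal (MvPolynomial (Fin (n + 1)) k))
      (W : Submodule k (Fin (n + 1) → k)),
      Ideal.IsHomogeneous (homogeneousSubmodule (Fin (n + 1)) k) I ∧ J ≤ I ∧
      (∀ v ∈ W, v ∈ Zset → ∀ f ∈ I, eval v f = 0) ∧
      (n + 1 ≤ Module.finrank k ↥W + s) ∧
      (∀ d, Chains I d → d ≤ max (r + 1 - s) 1) := by
    intro s
    induction s with
    | zero =>
      refine ⟨J, ⊤, hJhom, le_rfl, fun v _ hv f hf => hv f hf, ?_, ?_⟩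
      · rw [finrank_top, Module.finrank_fin_fun]
      · intro d hd
        have := base d hd
        omega
    | succ s IH =>
      obtain ⟨I, W, hIhom, hJI, hIvan, hWk, hIchain⟩ := IH
      obtain ⟨c, hc⟩ := avoid I
      refine ⟨I ⊔ Ideal.span {linForm c}, W ⊓ LinearMap.ker (dotL c), ?_,
        le_trans hJI le_sup_left, ?_, ?_, ?_⟩
      · refine hIhom.sup (Ideal.homogeneous_span _ _ ?_)
        rintro x hx
        rw [Set.mem_singleton_iff] at hx
        exact ⟨1, hx ▸ linForm_isHomogeneous c⟩
      · intro v hv hvZ f hf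
        obtain ⟨g, hg, h, hh, rfl⟩ := Submodule.mem_sup.mp hf
        obtain ⟨p, rfl⟩ := Ideal.mem_span_singleton'.mp hh
        rw [Submodule.mem_inf] at hv
        have hdot : (∑ i, c i * v i) = 0 := hv.2
        rw [map_add, hIvan v hv.1 hvZ g hg, map_mul, eval_linForm, hdot, mul_zero, add_zero]
      · have h1 := Submodule.finrank_sup_add_finrank_inf_eq W (LinearMap.ker (dotL c))
        have h2 := LinearMap.finrank_range_add_finrank_ker (dotL c)
        have h3 : Module.finrank k ↥(LinearMap.range (dotL c)) ≤ 1 := by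
          have := Submodule.finrank_le (LinearMap.range (dotL c))
          rwa [Module.finrank_self] at this
        have h4 : Module.finrank k ↥(W ⊔ LinearMap.ker (dotL c)) ≤ n + 1 := by
          have := Submodule.finrank_le (W ⊔ LinearMap.ker (dotL c))
          rwa [Module.finrank_fin_fun] at this
        rw [Module.finrank_fin_fun] at h2
        omega
      · intro d hd
        obtain ⟨cc, hmono, hprime, hle⟩ := hd
        rcases Nat.eq_zero_or_pos d with rfl | hdpos
        · omega
        haveI := hprime 0
        obtain ⟨Q, hQmin, hQle⟩ :=
          Ideal.exists_minimalPrimes_le (le_trans le_sup_left hle : I ≤ cc 0)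
        by_cases hQm : Q = mI
        · exfalso
          have h01 : cc 0 < cc ⟨1, by omega⟩ := hmono (by
            rw [Fin.lt_def]
            simpa using hdpos)
          have hcc0 : cc 0 = mI :=
            (hmMax.eq_of_le (hprime 0).ne_top (hQm ▸ hQle)).symm
          have htop : cc ⟨1, by omega⟩ = ⊤ := hmMax.1.2 _ (hcc0 ▸ h01)
          exact (hprime _).ne_top htop
        · have hlf : linForm c ∈ cc 0 :=
            hle (Ideal.mem_sup_right (Ideal.subset_span (Set.mem_singleton _)))
          have hQlt : Q < cc 0 :=
            lt_of_le_of_ne hQle (fun h => hc Q hQmin hQm (h ▸ hlf))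
          have hchain : Chains I (d + 1) := by
            refine ⟨Fin.cons Q cc, ?_, ?_, ?_⟩
            · rw [Fin.strictMono_iff_lt_succ]
              intro i
              induction i using Fin.cases with
              | zero => simpa [Fin.cons_succ] using hQlt
              | succ j =>
                rw [← Fin.succ_castSucc, Fin.cons_succ, Fin.cons_succ]
                exact hmono (Fin.castSucc_lt_succ (i := j))
            · intro i
              induction i using Fin.cases with
              | zero => exact hQmin.1.1
              | succ j => rw [Fin.cons_succ]; exact hprime j
            · rw [Fin.cons_zero]
              exact hQmin.1.2
          have := hIchain (d + 1) hchain
          omega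
  -- instantiate at s = r
  obtain ⟨I, W, hIhom, hJI, hIvan, hWk, hIchain⟩ := main r
  have hW4 : 4 ≤ Module.finrank k ↥W := by omega
  -- pick four independent vectors in W
  set b := Module.finBasis k ↥W with hb
  set u : Fin 4 → (Fin (n + 1) → k) :=
    fun i => ((b (Fin.castLE hW4 i) : ↥W) : Fin (n + 1) → k) with hu'
  have hu : LinearIndependent k u := by
    have h1 : LinearIndependent k (fun i : Fin 4 => b (Fin.castLE hW4 i)) :=
      b.linearIndependent.comp _ (Fin.strictMono_castLE hW4).injective
    exact h1.map' W.subtype W.ker_subtype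
  have huW : ∀ i, u i ∈ W := fun i => (b (Fin.castLE hW4 i)).2
  -- each point of the cone inside W gives a minimal prime of I
  have hvanline : ∀ v, v ∈ W → v ∈ Zset → I ≤ lineKer v := by
    intro v hvW hvZ f hf
    rw [mem_lineKer_iff]
    exact fun cc => homog_ideal_eval_smul_zero hIhom (fun g hg => hIvan v hvW hvZ g hg) hf cc
  have hnochain2 : ∀ P0 P1 P2 : Ideal (MvPolynomial (Fin (n + 1)) k),
      P0.IsPrime → P1.IsPrime → P2.IsPrime → I ≤ P0 → P0 < P1 → P1 < P2 → False := by
    intro P0 P1 P2 h0 h1 h2 hle h01 h12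
    have hch : Chains I 2 := by
      refine ⟨![P0, P1, P2], ?_, ?_, ?_⟩
      · rw [Fin.strictMono_iff_lt_succ]
        intro i
        fin_cases i
        · simpa using h01
        · simpa using h12
      · intro i
        fin_cases i <;> assumption
      · simpa using hle
    have := hIchain 2 hch
    omega
  have hlineMin : ∀ v, v ∈ W → v ∈ Zset → v ≠ 0 → lineKer v ∈ I.minimalPrimes := by
    intro v hvW hvZ hv0
    refine ⟨⟨lineKer_isPrime v, hvanline v hvW hvZ⟩, ?_⟩
    rintro Q ⟨hQp, hQle⟩ hQlineKer
    by_contra hnle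
    exact hnochain2 Q (lineKer v) (RingHom.ker (eval v)) hQp (lineKer_isPrime v)
      (RingHom.ker_isPrime _) hQle
      (lt_of_le_of_ne hQlineKer (fun h => hnle (h ▸ le_rfl)))
      (lineKer_lt_pointKer hv0)
  -- the bad set of parameters
  set T : Set (Fin (n + 1) → k) := {v | v ∈ W ∧ v ∈ Zset ∧ v ≠ 0} with hT
  set B : Set k := {a | ∃ v ∈ T, v ∈ planeAt u a} with hB
  have hBfin : B.Finite := by
    have hfinMin : I.minimalPrimes.Finite := by
      rw [Ideal.minimalPrimes_eq_comap]
      exact (minimalPrimes.finite_of_isNoetherianRing _).image _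
    have himg : (lineKer '' T).Finite := by
      refine hfinMin.subset ?_
      rintro _ ⟨v, hvT, rfl⟩
      exact hlineMin v hvT.1 hvT.2.1 hvT.2.2
    have hsub : B ⊆ ⋃ P ∈ lineKer '' T,
        {a | ∃ v ∈ T, lineKer v = P ∧ v ∈ planeAt u a} := by
      rintro a ⟨v, hvT, hvp⟩
      exact Set.mem_biUnion (Set.mem_image_of_mem _ hvT) ⟨v, hvT, rfl, hvp⟩
    refine Set.Finite.subset (Set.Finite.biUnion himg ?_) hsub
    rintro _ ⟨v₀, hv₀T, rfl⟩
    refine (planeAt_mem_finite hu hv₀T.2.2).subset ?_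
    rintro a ⟨v, hvT, hlk, hvplane⟩
    have hsp : v₀ ∈ Submodule.span k {v} := span_of_lineKer_eq hvT.2.2 hlk
    obtain ⟨t, ht⟩ := Submodule.mem_span_singleton.mp hsp
    show v₀ ∈ planeAt u a
    rw [← ht]
    exact (planeAt u a).smul_mem t hvplane
  -- an embedding of k into the complement of B
  have hcomplInf : (Bᶜ : Set k).Infinite := hBfin.infinite_compl
  haveI := hcomplInf.to_subtype
  have hcard : (Cardinal.mk k) ≤ Cardinal.mk ↥(Bᶜ : Set k) := by
    have h1 := Cardinal.mk_sum_compl B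
    have h2 : (Cardinal.mk ↥B) ≤ Cardinal.mk ↥(Bᶜ : Set k) :=
      le_trans hBfin.lt_aleph0.le (Cardinal.aleph0_le_mk _)
    exact le_of_eq (h1.symm.trans (Cardinal.add_eq_right (Cardinal.aleph0_le_mk _) h2))
  obtain ⟨e⟩ := Cardinal.le_def _ _ |>.mp hcard
  refine ⟨fun a => planeAt u ((e a : k)), ?_, ?_⟩
  · intro a a' h
    exact e.injective (Subtype.coe_injective (planeAt_injective hu h))
  · intro a
    refine ⟨planeAt_finrank hu _, ?_⟩
    ext v
    simp only [Set.mem_inter_iff, Set.mem_singleton_iff]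
    constructor
    · rintro ⟨hvp, hvZ⟩
      by_contra hv0
      have haB : ((e a : k)) ∈ B := ⟨v, ⟨planeAt_le huW hvp, hvZ, hv0⟩, hvp⟩
      exact (e a).2 haB
    · rintro rfl
      exact ⟨(planeAt u _).zero_mem, h0Z⟩
end
end
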